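/- The monoidal deduction system over signature {+, -, 0, h_1,...,h_n} with constants a_1,...,a_k has the finite basis property: for every positive strand s there exists a finite set P_s^f of context pairs such that for all positive strands s' of the same length, P_s ⊆ P_{s'} if and only if P_s^f ⊆ P_{s'}. -/

import Mathlib

/-- The coefficient ring `ℤ[X₁,…,Xₙ]`. -/
abbrev PolyR (n : ℕ) := MvPolynomial (Fin n) ℤ

/-- The free module `(ℤ[X₁,…,Xₙ])^k` interpreting ground terms. -/
abbrev MonMod (n k : ℕ) := Fin k → PolyR n

/-- Contexts over the monoidal signature `{+, -, 0, h₁, …, hₙ}` with `m`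
holes (nullary symbols of a context are the public constant `0` and the
holes). -/
inductive MCtx (n m : ℕ) : Type
  | hole : Fin m → MCtx n m
  | zero : MCtx n m
  | add : MCtx n m → MCtx n m → MCtx n m
  | neg : MCtx n m → MCtx n m
  | hom : Fin n → MCtx n m → MCtx n m

/-- Interpretation of a context as a map `((ℤ[X])^k)^m → (ℤ[X])^k`:
`hᵢ` acts as multiplication by `Xᵢ`. -/
noncomputable def MCtx.interp {n m : ℕ} (k : ℕ) : MCtx n m → (Fin m → MonMod n k) → MonMod n k
  | .hole i, v => v i
  | .zero, _ => 0
  | .add t u, v => t.interp k v + u.interp k v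
  | .neg t, v => -(t.interp k v)
  | .hom i t, v => (MvPolynomial.X i : PolyR n) • t.interp k v

/-- A context does not use the minus symbol. -/
def MCtx.NoNeg {n m : ℕ} : MCtx n m → Prop
  | .hole _ => True
  | .zero => True
  | .add t u => t.NoNeg ∧ u.NoNeg
  | .neg _ => False
  | .hom _ t => t.NoNeg

/-- Ground terms over the monoidal signature `{+, -, 0, h₁, …, hₙ}` with
constants `a₁, …, a_k`. -/
inductive MTerm (n k : ℕ) : Type
  | const : Fin k → MTerm n k
  | zero : MTerm n k
  | add : MTerm n k → MTerm n k → MTerm n k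
  | neg : MTerm n k → MTerm n k
  | hom : Fin n → MTerm n k → MTerm n k

/-- Interpretation `[[·]]` of ground terms into `(ℤ[X₁,…,Xₙ])^k`:
`[[aᵢ]] = eᵢ`, `[[hᵢ(t)]] = Xᵢ·[[t]]`, `[[t+u]] = [[t]]+[[u]]`,
`[[-t]] = -[[t]]`. -/
noncomputable def MTerm.interp {n k : ℕ} : MTerm n k → MonMod n k
  | .const i => Pi.single i 1
  | .zero => 0
  | .add t u => t.interp + u.interp
  | .neg t => -t.interp
  | .hom i t => (MvPolynomial.X i : PolyR n) • t.interp

/-- Plugging ground terms into the holes of a context. -/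
def MCtx.plug {n m k : ℕ} : MCtx n m → (Fin m → MTerm n k) → MTerm n k
  | .hole i, s => s i
  | .zero, _ => .zero
  | .add t u, s => .add (t.plug s) (u.plug s)
  | .neg t, s => .neg (t.plug s)
  | .hom i t, s => .hom i (t.plug s)

/-!
A context `C` acts on a strand `s` through the linear form `∑ᵢ cᵢ • [[sᵢ]]`, where `c = C.coeff`,
and every vector of `ℤ[X₁,…,Xₙ]^m` is the coefficient vector of some context. Hence
`P_s ⊆ P_{s'}` exactly when the syzygy module of `[[s]]` is contained in that of `[[s']]`.
As `ℤ[X₁,…,Xₙ]` is Noetherian, the syzygies of `[[s]]` are generated by finitely many `b₁,…,b_l`,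
and the pairs `(C_{bⱼ}, 0)` with `C_{bⱼ}.coeff = bⱼ` form the finite basis.
-/

namespace MCtx

variable {n m : ℕ}

noncomputable def coeff : MCtx n m → (Fin m → PolyR n)
  | .hole i => Pi.single i 1
  | .zero => 0
  | .add t u => t.coeff + u.coeff
  | .neg t => -t.coeff
  | .hom i t => (MvPolynomial.X i : PolyR n) • t.coeff

theorem interp_plug {k : ℕ} (C : MCtx n m) (s : Fin m → MTerm n k) :
    (C.plug s).interp = ∑ i, C.coeff i • (s i).interp := by
  induction C with
  | hole i => simp [plug, coeff, Pi.single_apply]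
  | zero => simp [plug, coeff, MTerm.interp]
  | add t u ht hu => simp [plug, coeff, MTerm.interp, ht, hu, add_smul, Finset.sum_add_distrib]
  | neg t ht => simp [plug, coeff, MTerm.interp, ht]
  | hom i t ht => simp [plug, coeff, MTerm.interp, ht, Finset.smul_sum, smul_smul]

variable (n m) in
noncomputable def coeffRange : AddSubgroup (Fin m → PolyR n) where
  carrier := Set.range coeff
  zero_mem' := ⟨.zero, rfl⟩
  add_mem' := by
    rintro _ _ ⟨C, rfl⟩ ⟨D, rfl⟩
    exact ⟨.add C D, rfl⟩
  neg_mem' := by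
    rintro _ ⟨C, rfl⟩
    exact ⟨.neg C, rfl⟩

theorem smul_mem_coeffRange (p : PolyR n) {c : Fin m → PolyR n} (hc : c ∈ coeffRange n m) :
    p • c ∈ coeffRange n m := by
  induction p using MvPolynomial.induction_on with
  | C a =>
    rw [← MvPolynomial.algebraMap_eq, algebraMap_smul]
    exact zsmul_mem hc a
  | add p q hp hq =>
    rw [add_smul]
    exact add_mem hp hq
  | mul_X p j hp =>
    obtain ⟨C, hC⟩ := hp
    exact ⟨.hom j C, by rw [coeff, hC, mul_comm, mul_smul]⟩

theorem coeff_surjective : Function.Surjective (coeff : MCtx n m → (Fin m → PolyR n)) := by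
  intro c
  have hc : c = ∑ i, c i • Pi.single i 1 := by
    simp only [← Pi.single_smul', smul_eq_mul, mul_one]
    exact (Finset.univ_sum_single c).symm
  show c ∈ coeffRange n m
  rw [hc]
  exact sum_mem fun i _ => smul_mem_coeffRange (c i) ⟨.hole i, rfl⟩

end MCtx

noncomputable def syzygies {n k m : ℕ} (s : Fin m → MTerm n k) :
    Submodule (PolyR n) (Fin m → PolyR n) :=
  LinearMap.ker (Fintype.linearCombination (PolyR n) fun i => (s i).interp)

namespace MCtx

variable {n k m : ℕ}

theorem interp_plug_eq_iff (C D : MCtx n m) (s : Fin m → MTerm n k) :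
    (C.plug s).interp = (D.plug s).interp ↔ C.coeff - D.coeff ∈ syzygies s := by
  rw [syzygies, LinearMap.mem_ker, map_sub, sub_eq_zero, Fintype.linearCombination_apply,
    Fintype.linearCombination_apply, interp_plug, interp_plug]

theorem setOf_interp_plug_eq_subset_iff (s s' : Fin m → MTerm n k) :
    {p : MCtx n m × MCtx n m | (p.1.plug s).interp = (p.2.plug s).interp} ⊆
        {p | (p.1.plug s').interp = (p.2.plug s').interp} ↔
      syzygies s ≤ syzygies s' := by
  simp only [Set.ofPred_subset_ofPred, interp_plug_eq_iff]
  constructor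
  · intro h c hc
    obtain ⟨C, rfl⟩ := coeff_surjective c
    simpa only [coeff, sub_zero] using h (C, .zero) (by simpa only [coeff, sub_zero] using hc)
  · exact fun h p hp => h hp

end MCtx

/-- the monoidal deduction system over `{+, -, 0, h₁,…,hₙ}` with
constants `a₁,…,a_k` has the finite basis property: for every positive strand
`s` there is a finite set `P_s^f` of context pairs such that for all positive
strands `s'` of the same length, `P_s ⊆ P_{s'}` iff `P_s^f ⊆ P_{s'}` (where
`P_s` is the set of context pairs equal on `s` modulo the monoidal theory,
given by a relation `eqE` faithfully interpreted into `(ℤ[X₁,…,Xₙ])^k`). -/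
theorem monoidal_finite_basis_property
    {n k m : ℕ}
    (eqE : MTerm n k → MTerm n k → Prop)
    (hfaithful : ∀ t u : MTerm n k, eqE t u ↔ t.interp = u.interp) :
    ∀ s : Fin m → MTerm n k,
      ∃ Pf : Finset (MCtx n m × MCtx n m),
        ∀ s' : Fin m → MTerm n k,
          ({p : MCtx n m × MCtx n m | eqE (p.1.plug s) (p.2.plug s)} ⊆
            {p : MCtx n m × MCtx n m | eqE (p.1.plug s') (p.2.plug s')}) ↔
          ∀ p ∈ Pf, eqE (p.1.plug s') (p.2.plug s') := by
  intro s
  classical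
  obtain ⟨T, hT⟩ := IsNoetherian.noetherian (syzygies s)
  let realize := Function.surjInv (MCtx.coeff_surjective (n := n) (m := m))
  refine ⟨T.image fun c => (realize c, .zero), fun s' => ?_⟩
  simp only [hfaithful]
  rw [MCtx.setOf_interp_plug_eq_subset_iff, ← hT, Submodule.span_le]
  simp only [Finset.forall_mem_image, MCtx.interp_plug_eq_iff, realize, Function.surjInv_eq,
    MCtx.coeff, sub_zero]
  rfl
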